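/- Let X be a quandle acting on itself. The maps D : C_{n-1}(X;X) → C_n(X;X) given by D(x₁;x₂,…,xₙ) = (-1)^{n-1}(x₁;x₁,x₂,…,xₙ) form a chain map (∂D = D∂), and P∘D is the identity, where P(x₁;x₂,…,xₙ) = (-1)ⁿ(x₂;x₃,…,xₙ). -/

import Mathlib

/-- The `i`-th face `∂¹ᵢ` of the chain complex of the `X`-set `X`. -/
def yFace1 {Y X : Type*} (star : Y → X → Y) (act : X → X → X)
    (q : Y × List X) (i : ℕ) : Y × List X :=
  match q.2[i]? with
  | some b => (star q.1 b, (q.2.take i).map (fun a => act a b) ++ q.2.drop (i + 1))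
  | none => q

/-- The boundary `∂ = Σᵢ (-1)ⁱ (∂⁰ᵢ - ∂¹ᵢ)` on `C_•(Y;X)`. -/
noncomputable def ybnd {Y X : Type*} (star : Y → X → Y) (act : X → X → X)
    (c : (Y × List X) →₀ ℤ) : (Y × List X) →₀ ℤ :=
  c.sum fun q z =>
    ∑ i ∈ Finset.range q.2.length,
      (Finsupp.single (q.1, q.2.eraseIdx i) ((-1) ^ (i + 1) * z)
        - Finsupp.single (yFace1 star act q i) ((-1) ^ (i + 1) * z))

/-- `D(x₁;x₂,…,xₙ) = (-1)^{n-1} (x₁;x₁,x₂,…,xₙ)`. -/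
noncomputable def Dmap {X : Type*} (c : (X × List X) →₀ ℤ) : (X × List X) →₀ ℤ :=
  c.sum fun q z => Finsupp.single (q.1, q.1 :: q.2) ((-1) ^ q.2.length * z)

/-- `P(x₁;x₂,…,xₙ) = (-1)ⁿ (x₂;x₃,…,xₙ)` (zero on 0-chains). -/
noncomputable def Pmap {X : Type*} (c : (X × List X) →₀ ℤ) : (X × List X) →₀ ℤ :=
  c.sum fun q z =>
    match q.2 with
    | [] => 0
    | b :: t => Finsupp.single (b, t) ((-1) ^ t.length * z)

section Chains

variable {Y X : Type*}

noncomputable def ybndAddHom (star : Y → X → Y) (act : X → X → X) :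
    ((Y × List X) →₀ ℤ) →+ ((Y × List X) →₀ ℤ) where
  toFun := ybnd star act
  map_zero' := Finsupp.sum_zero_index
  map_add' _ _ := Finsupp.sum_add_index' (by simp) fun _ _ _ => by
    rw [← Finset.sum_add_distrib]
    refine Finset.sum_congr rfl fun _ _ => ?_
    simp only [mul_add, Finsupp.single_add]
    abel

noncomputable def DmapAddHom : ((X × List X) →₀ ℤ) →+ ((X × List X) →₀ ℤ) where
  toFun := Dmap
  map_zero' := Finsupp.sum_zero_index
  map_add' _ _ := Finsupp.sum_add_index' (by simp) fun _ _ _ => by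
    simp only [mul_add, Finsupp.single_add]

noncomputable def PmapAddHom : ((X × List X) →₀ ℤ) →+ ((X × List X) →₀ ℤ) where
  toFun := Pmap
  map_zero' := Finsupp.sum_zero_index
  map_add' _ _ := Finsupp.sum_add_index' (fun ⟨_, l⟩ => by cases l <;> simp)
    fun ⟨_, l⟩ _ _ => by cases l <;> simp [mul_add, Finsupp.single_add]

lemma DmapAddHom_apply (c : (X × List X) →₀ ℤ) : DmapAddHom c = Dmap c :=
  rfl

lemma ybnd_single (star : Y → X → Y) (act : X → X → X) (q : Y × List X) (z : ℤ) :
    ybnd star act (Finsupp.single q z) =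
      ∑ i ∈ Finset.range q.2.length,
        (Finsupp.single (q.1, q.2.eraseIdx i) ((-1) ^ (i + 1) * z)
          - Finsupp.single (yFace1 star act q i) ((-1) ^ (i + 1) * z)) :=
  Finsupp.sum_single_index (by simp)

lemma Dmap_single (q : X × List X) (z : ℤ) :
    Dmap (Finsupp.single q z) = Finsupp.single (q.1, q.1 :: q.2) ((-1) ^ q.2.length * z) :=
  Finsupp.sum_single_index (by simp)

lemma Pmap_single_cons (x b : X) (t : List X) (z : ℤ) :
    Pmap (Finsupp.single (x, b :: t) z) = Finsupp.single (b, t) ((-1) ^ t.length * z) :=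
  Finsupp.sum_single_index (by simp)

lemma length_yFace1 (star : Y → X → Y) (act : X → X → X) (q : Y × List X) {i : ℕ}
    (hi : i < q.2.length) : (yFace1 star act q i).2.length = q.2.length - 1 := by
  simp only [yFace1, List.getElem?_eq_getElem hi, List.length_append, List.length_map,
    List.length_take, List.length_drop]
  omega

lemma yFace1_cons_self_zero (act : X → X → X) (hidem : ∀ a : X, act a a = a)
    (x : X) (l : List X) : yFace1 act act (x, x :: l) 0 = (x, l) := by
  simp [yFace1, hidem]

lemma yFace1_cons_self_succ (act : X → X → X) (x : X) (l : List X) (i : ℕ) :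
    yFace1 act act (x, x :: l) (i + 1) =
      ((yFace1 act act (x, l) i).1,
        (yFace1 act act (x, l) i).1 :: (yFace1 act act (x, l) i).2) := by
  unfold yFace1
  rcases h : l[i]? with _ | b <;> simp [h]

lemma ybnd_Dmap_single (act : X → X → X) (hidem : ∀ a : X, act a a = a)
    (x : X) (l : List X) (z : ℤ) :
    ybnd act act (Dmap (Finsupp.single (x, l) z)) =
      Dmap (ybnd act act (Finsupp.single (x, l) z)) := by
  rw [Dmap_single, ybnd_single, ybnd_single, ← DmapAddHom_apply, map_sum]
  dsimp only
  -- the two 0-th faces of `(x; x, l)` coincide since `x ▹ x = x`;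
  -- the other faces are `D` of the faces of `(x; l)`
  rw [List.length_cons, Finset.sum_range_succ', List.eraseIdx_cons_zero,
    yFace1_cons_self_zero act hidem, sub_self, add_zero]
  refine Finset.sum_congr rfl fun i hmem => ?_
  have hi : i < l.length := Finset.mem_range.mp hmem
  obtain ⟨n, hn⟩ : ∃ n, l.length = n + 1 := ⟨l.length - 1, by omega⟩
  have hsign :
      (-1 : ℤ) ^ (i + 1 + 1) * ((-1) ^ (n + 1) * z) = (-1) ^ n * ((-1) ^ (i + 1) * z) := by
    ring
  rw [map_sub, DmapAddHom_apply, DmapAddHom_apply, Dmap_single, Dmap_single,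
    List.eraseIdx_cons_succ, yFace1_cons_self_succ, List.length_eraseIdx_of_lt hi,
    length_yFace1 act act (x, l) hi, hn, Nat.add_sub_cancel, hsign]

lemma ybnd_comp_Dmap (act : X → X → X) (hidem : ∀ a : X, act a a = a) :
    (ybndAddHom act act).comp DmapAddHom = DmapAddHom.comp (ybndAddHom act act) :=
  Finsupp.addHom_ext fun ⟨x, l⟩ z => ybnd_Dmap_single act hidem x l z

lemma Pmap_comp_Dmap : PmapAddHom.comp DmapAddHom = AddMonoidHom.id ((X × List X) →₀ ℤ) :=
  Finsupp.addHom_ext fun ⟨x, l⟩ z => by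
    change Pmap (Dmap (Finsupp.single (x, l) z)) = Finsupp.single (x, l) z
    rw [Dmap_single, Pmap_single_cons, ← mul_assoc, ← pow_add, Even.neg_one_pow ⟨_, rfl⟩,
      one_mul]

end Chains

theorem stmt_6_general {X : Type*} (act : X → X → X)
    (hidem : ∀ a : X, act a a = a) :
    (∀ c : (X × List X) →₀ ℤ, ybnd act act (Dmap c) = Dmap (ybnd act act c)) ∧
    (∀ c : (X × List X) →₀ ℤ, Pmap (Dmap c) = c) :=
  ⟨fun c => DFunLike.congr_fun (ybnd_comp_Dmap act hidem) c,
    fun c => DFunLike.congr_fun Pmap_comp_Dmap c⟩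

/-- For a quandle `X` acting on itself, `D` is a chain map and `P ∘ D` is the identity. -/
theorem stmt_6 {X : Type*} (act : X → X → X)
    (hbij : ∀ b : X, Function.Bijective fun a => act a b)
    (hdist : ∀ a b c : X, act (act a b) c = act (act a c) (act b c))
    (hidem : ∀ a : X, act a a = a) :
    (∀ c : (X × List X) →₀ ℤ, ybnd act act (Dmap c) = Dmap (ybnd act act c)) ∧
    (∀ c : (X × List X) →₀ ℤ, Pmap (Dmap c) = c) :=
  stmt_6_general act hidem
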